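/- For every κ > 1 and every q with p − 1 < q < p (where p > 1), there exists a constant C = C(κ, q) > 0 such that |a + b|^p ≤ κ·|a|^p + |b|^p + C·|a|^{p−q}·|b|^q for all real a, b. -/

import Mathlib

/-!
Homogeneity reduces the inequality to `(1 + s) ^ p ≤ κ + s ^ p + C * s ^ q` with `s = |b| / |a|`.
Convexity of `t ↦ t ^ p` on the chord from `x` to `2 * x` gives
`(x + y) ^ p ≤ x ^ p + (2 ^ p - 1) * x ^ (p - 1) * y` for `0 ≤ y ≤ x`. For `s ≥ 1` this bounds
`(1 + s) ^ p` by `s ^ p + (2 ^ p - 1) * s ^ (p - 1)`, and `s ^ (p - 1) ≤ s ^ q` since `p - 1 ≤ q`.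
For `s ≤ 1` it gives `1 + (2 ^ p - 1) * s`, whose linear term is absorbed by `κ - 1` when `s` is
small and by `C * s ^ q` otherwise.
-/

open Real

lemma add_rpow_le_rpow_add_mul {p x y : ℝ} (hp : 1 ≤ p) (hy : 0 ≤ y) (hyx : y ≤ x) :
    (x + y) ^ p ≤ x ^ p + (2 ^ p - 1) * x ^ (p - 1) * y := by
  obtain rfl | hx := (hy.trans hyx).eq_or_lt
  · obtain rfl : y = 0 := le_antisymm hyx hy
    simp
  set s := y / x
  have hs0 : 0 ≤ s := by positivity
  have hs1 : s ≤ 1 := (div_le_one hx).2 hyx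
  have hconv := (convexOn_rpow hp).2 (Set.mem_Ici.2 hx.le)
    (Set.mem_Ici.2 (by positivity : 0 ≤ 2 * x)) (sub_nonneg.2 hs1) hs0 (sub_add_cancel 1 s)
  have hcomb : (1 - s) * x + s * (2 * x) = x + y := by
    simp only [s]; field_simp; ring
  simp only [smul_eq_mul, hcomb, mul_rpow zero_le_two hx.le] at hconv
  calc (x + y) ^ p ≤ (1 - s) * x ^ p + s * (2 ^ p * x ^ p) := hconv
    _ = x ^ p + (2 ^ p - 1) * (x ^ p / x) * y := by simp only [s]; field_simp; ring
    _ = x ^ p + (2 ^ p - 1) * x ^ (p - 1) * y := by rw [rpow_sub_one hx.ne']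

lemma exists_one_add_rpow_le {p κ q : ℝ} (hp : 1 ≤ p) (hκ : 1 < κ) (hq : p - 1 ≤ q) (hq0 : 0 ≤ q) :
    ∃ C > 0, ∀ s, 0 ≤ s → (1 + s) ^ p ≤ κ + s ^ p + C * s ^ q := by
  set A : ℝ := 2 ^ p - 1
  have hA : 0 < A := by
    have : (2 : ℝ) ^ (1 : ℝ) ≤ 2 ^ p := rpow_le_rpow_of_exponent_le one_le_two hp
    rw [rpow_one] at this
    linarith
  set ε := (κ - 1) / A
  have hε : 0 < ε := div_pos (sub_pos.2 hκ) hA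
  set C := A * max 1 (ε⁻¹ ^ q)
  have hAC : A ≤ C := le_mul_of_one_le_right hA.le (le_max_left _ _)
  have hAεC : A * ε⁻¹ ^ q ≤ C := mul_le_mul_of_nonneg_left (le_max_right _ _) hA.le
  refine ⟨C, by positivity, fun s hs => ?_⟩
  have hsq : 0 ≤ s ^ q := rpow_nonneg hs q
  rcases le_total 1 s with h1s | hs1
  · have hchord := add_rpow_le_rpow_add_mul hp zero_le_one h1s
    calc (1 + s) ^ p = (s + 1) ^ p := by rw [add_comm]
      _ ≤ s ^ p + A * s ^ (p - 1) := by simpa using hchord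
      _ ≤ s ^ p + C * s ^ q := by gcongr
      _ ≤ κ + s ^ p + C * s ^ q := by linarith
  · have hchord := add_rpow_le_rpow_add_mul hp hs hs1
    have hAs : A * s ≤ κ - 1 + C * s ^ q := by
      rcases le_total s ε with hsε | hεs
      · have : A * ε = κ - 1 := mul_div_cancel₀ _ hA.ne'
        have : 0 ≤ C * s ^ q := by positivity
        nlinarith
      · have hεs' : 1 ≤ ε⁻¹ ^ q * s ^ q := by
          rw [← mul_rpow (by positivity) hs]
          exact one_le_rpow (by rwa [inv_mul_eq_div, one_le_div hε]) hq0
        calc A * s ≤ A * (ε⁻¹ ^ q * s ^ q) := by gcongr; linarith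
          _ ≤ C * s ^ q := by rw [← mul_assoc]; gcongr
          _ ≤ κ - 1 + C * s ^ q := by linarith
    calc (1 + s) ^ p ≤ 1 + A * s := by simpa using hchord
      _ ≤ κ + s ^ p + C * s ^ q := by linarith [rpow_nonneg hs p]

lemma add_rpow_le_of_one_add_rpow_le {p κ q C x y : ℝ} (hp : 0 < p) (hC : 0 ≤ C)
    (h : ∀ s, 0 ≤ s → (1 + s) ^ p ≤ κ + s ^ p + C * s ^ q) (hx : 0 ≤ x) (hy : 0 ≤ y) :
    (x + y) ^ p ≤ κ * x ^ p + y ^ p + C * x ^ (p - q) * y ^ q := by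
  obtain rfl | hx := hx.eq_or_lt
  · rw [zero_add, zero_rpow hp.ne', mul_zero, zero_add]
    have : 0 ≤ C * 0 ^ (p - q) * y ^ q := by positivity
    linarith
  obtain ⟨s, hs, rfl⟩ : ∃ s, 0 ≤ s ∧ y = x * s := ⟨y / x, by positivity, by field_simp⟩
  calc (x + x * s) ^ p = x ^ p * (1 + s) ^ p := by
        rw [← mul_rpow hx.le (by positivity), mul_one_add]
    _ ≤ x ^ p * (κ + s ^ p + C * s ^ q) := mul_le_mul_of_nonneg_left (h s hs) (by positivity)
    _ = κ * x ^ p + (x * s) ^ p + C * x ^ (p - q) * (x * s) ^ q := by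
      rw [mul_rpow hx.le hs, mul_rpow hx.le hs, rpow_sub hx]
      field_simp

theorem stmt_1_general (p κ q : ℝ) (hp : 1 < p) (hκ : 1 < κ) (hq1 : p - 1 < q) :
    ∃ C > 0, ∀ a b : ℝ,
      |a + b| ^ p ≤ κ * |a| ^ p + |b| ^ p + C * |a| ^ (p - q) * |b| ^ q := by
  obtain ⟨C, hC, h⟩ := exists_one_add_rpow_le hp.le hκ hq1.le (by linarith)
  refine ⟨C, hC, fun a b => ?_⟩
  calc |a + b| ^ p ≤ (|a| + |b|) ^ p := rpow_le_rpow (abs_nonneg _) (abs_add_le a b) (by linarith)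
    _ ≤ _ := add_rpow_le_of_one_add_rpow_le (by linarith) hC.le h (abs_nonneg a) (abs_nonneg b)

theorem stmt_1 (p κ q : ℝ) (hp : 1 < p) (hκ : 1 < κ) (hq1 : p - 1 < q) (hq2 : q < p) :
    ∃ C > 0, ∀ a b : ℝ,
      |a + b| ^ p ≤ κ * |a| ^ p + |b| ^ p + C * |a| ^ (p - q) * |b| ^ q :=
  stmt_1_general p κ q hp hκ hq1
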